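/- arXiv:2101.03576 — 6 statements merged into one kernel-verified Lean document; each statement's English description precedes it below -/
import Mathlib

section
/- Let s = (s_1,…,s_r) and t = (t_1,…,t_r) be r-tuples of non-negative integers and ζ a primitive n-th root of unity. Then H_{n−1}(s; t; ζ) = (−1)^{w(s)} · H_{n−1}(s̄; s̄ − t̄; ζ), where s̄ denotes the reverse tuple (s_r,…,s_1) and w(s) = s_1 + ⋯ + s_r. -/
/-!
Substitute `kᵢ ↦ n - kᵢ` in `H_{n-1}(s; t; ζ)`: this reverses the order of the indices, and since
`ζ^n = 1` we have `ζ^{n-k} = ζ^{-k}` and `[n-k]_ζ = -ζ^{-k} [k]_ζ`, so each factor transforms as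
`ζ^{(n-k)t} / [n-k]_ζ^s = (-1)^s ζ^{k(s-t)} / [k]_ζ^s`.
-/

open Finset

/-- The q-analog of a natural number: `[k]_q = (1 - q^k)/(1 - q)`. -/
noncomputable def qnum (q : ℂ) (k : ℕ) : ℂ := (1 - q ^ k) / (1 - q)

/-- Nested sum for `H_n(s;t;q)`, recursing from the top index; the list is the
reversed list of pairs `(s_i, t_i)`. -/
noncomputable def Hrev (q : ℂ) : ℕ → List (ℕ × ℤ) → ℂ
  | _, [] => 1
  | n, (s, t) :: rest =>
      ∑ k ∈ Finset.Icc 1 n, q ^ ((k : ℤ) * t) / qnum q k ^ s * Hrev q (k - 1) rest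

/-- `H q n s t = H_n(s;t;q) = Σ_{1 ≤ k_1 < ⋯ < k_r ≤ n} ∏ q^{k_i t_i}/[k_i]_q^{s_i}`. -/
noncomputable def H (q : ℂ) (n : ℕ) (s : List ℕ) (t : List ℤ) : ℂ :=
  Hrev q n (s.zip t).reverse

/-- `Hfwd q a b [(s₁,t₁), …, (s_r,t_r)]` is the sum over `a ≤ k₁ < ⋯ < k_r < b` of
`∏ q^{kᵢ tᵢ} / [kᵢ]_q^{sᵢ}`. -/
noncomputable def Hfwd (q : ℂ) : ℕ → ℕ → List (ℕ × ℤ) → ℂ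
  | _, _, [] => 1
  | a, b, (s, t) :: rest =>
      ∑ k ∈ Ico a b, q ^ ((k : ℤ) * t) / qnum q k ^ s * Hfwd q (k + 1) b rest

theorem Hfwd_append (q : ℂ) (L : List (ℕ × ℤ)) (p : ℕ × ℤ) (a b : ℕ) :
    Hfwd q a b (L ++ [p]) =
      ∑ k ∈ Ico a b, q ^ ((k : ℤ) * p.2) / qnum q k ^ p.1 * Hfwd q a k L := by
  induction L generalizing a with
  | nil => simp [Hfwd]
  | cons hd L ih =>
    obtain ⟨s, t⟩ := hd
    simp only [List.cons_append, Hfwd, ih, mul_sum]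
    rw [sum_Ico_Ico_comm']
    exact sum_congr rfl fun _ _ => sum_congr rfl fun _ _ => by ring

theorem Hrev_sub_one_eq_Hfwd (q : ℂ) (L : List (ℕ × ℤ)) (m : ℕ) :
    Hrev q (m - 1) L = Hfwd q 1 m L.reverse := by
  induction L generalizing m with
  | nil => simp [Hrev, Hfwd]
  | cons hd L ih =>
    obtain ⟨s, t⟩ := hd
    have hIcc : Icc 1 (m - 1) = Ico 1 m := by ext; simp only [mem_Icc, mem_Ico]; omega
    simp only [List.reverse_cons, Hfwd_append, Hrev, hIcc, ih]

theorem qnum_eq_neg_mul_qnum {ζ : ℂ} {k j : ℕ} (h : ζ ^ k * ζ ^ j = 1) :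
    qnum ζ k = -ζ ^ k * qnum ζ j := by
  unfold qnum
  rw [mul_div_assoc', mul_sub, mul_one, neg_mul, h]
  ring

theorem zpow_div_qnum_pow_eq_neg_one_pow_mul {ζ : ℂ} {k j : ℕ} (hζ : ζ ^ (k + j) = 1)
    (hζ0 : ζ ≠ 0) (s : ℕ) (t : ℤ) :
    ζ ^ ((k : ℤ) * t) / qnum ζ k ^ s = (-1) ^ s * (ζ ^ ((j : ℤ) * (s - t)) / qnum ζ j ^ s) := by
  rw [pow_add] at hζ
  have hj : ζ ^ j = (ζ ^ k)⁻¹ := eq_inv_of_mul_eq_one_right hζ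
  rw [qnum_eq_neg_mul_qnum hζ, zpow_mul, zpow_mul, zpow_natCast, zpow_natCast, hj,
    zpow_sub₀ (inv_ne_zero (pow_ne_zero _ hζ0)), zpow_natCast, inv_zpow', zpow_neg, neg_mul,
    neg_pow, mul_pow]
  simp only [div_eq_mul_inv, mul_inv, inv_inv, ← inv_pow, inv_neg_one]
  ring

def dualPairs (L : List (ℕ × ℤ)) : List (ℕ × ℤ) :=
  L.map fun p => (p.1, (p.1 : ℤ) - p.2)

theorem dualPairs_cons (s : ℕ) (t : ℤ) (L : List (ℕ × ℤ)) :
    dualPairs ((s, t) :: L) = (s, (s : ℤ) - t) :: dualPairs L :=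
  rfl

theorem Hfwd_eq_neg_one_pow_mul_Hrev_dualPairs {ζ : ℂ} {n : ℕ} (hζ : ζ ^ n = 1)
    (L : List (ℕ × ℤ)) (a : ℕ) :
    Hfwd ζ a n L = (-1) ^ (L.map Prod.fst).sum * Hrev ζ (n - a) (dualPairs L) := by
  induction L generalizing a with
  | nil => simp [Hfwd, Hrev, dualPairs]
  | cons p L ih =>
    obtain ⟨s, t⟩ := p
    simp only [Hfwd, dualPairs_cons, List.map_cons, Hrev, List.sum_cons, mul_sum]
    refine sum_nbij' (n - ·) (n - ·) ?_ ?_ ?_ ?_ fun k hk => ?_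
    any_goals intro k hk; simp only [mem_Ico, mem_Icc] at hk ⊢; omega
    have hkn : k < n := (mem_Ico.mp hk).2
    have hζ0 : ζ ≠ 0 := ne_zero_pow (by omega) (hζ ▸ one_ne_zero)
    have hζk : ζ ^ (k + (n - k)) = 1 := by rwa [Nat.add_sub_cancel' hkn.le]
    rw [ih (k + 1), zpow_div_qnum_pow_eq_neg_one_pow_mul hζk hζ0, Nat.sub_sub, pow_add]
    ring

theorem zip_zipWith_sub (s : List ℕ) (t : List ℤ) :
    s.zip (List.zipWith (· - ·) (s.map (↑)) t) = dualPairs (s.zip t) := by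
  induction s generalizing t with
  | nil => simp [dualPairs]
  | cons a s ih => cases t <;> simp_all [dualPairs]

theorem List.zip_reverse_reverse {α β : Type*} {l₁ : List α} {l₂ : List β}
    (h : l₁.length = l₂.length) : l₁.reverse.zip l₂.reverse = (l₁.zip l₂).reverse := by
  simp only [List.zip_eq_zipWith, List.reverse_zipWith h]

theorem stmt2_general (n : ℕ) (ζ : ℂ) (hζ : IsPrimitiveRoot ζ n)
    (s : List ℕ) (t : List ℤ) (hlen : s.length = t.length) :
    H ζ (n - 1) s t
      = (-1) ^ s.sum *
        H ζ (n - 1) s.reverse (List.zipWith (fun a b => (a : ℤ) - b) s t).reverse := by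
  -- `(a : ℤ)` under `zipWith` elaborates by lifting `s` to `List ℤ` through the list monad
  rw [bind_pure_comp, List.map_eq_map]
  have hlen' : s.length = (List.zipWith (· - ·) (s.map (↑)) t).length := by simp [hlen]
  unfold H
  rw [List.zip_reverse_reverse hlen', List.reverse_reverse, zip_zipWith_sub,
    Hrev_sub_one_eq_Hfwd, List.reverse_reverse,
    Hfwd_eq_neg_one_pow_mul_Hrev_dualPairs hζ.pow_eq_one _ 1,
    List.map_fst_zip hlen.le]

theorem stmt2 (n : ℕ) (hn : 0 < n) (ζ : ℂ) (hζ : IsPrimitiveRoot ζ n)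
    (s : List ℕ) (t : List ℤ) (hlen : s.length = t.length) (ht : ∀ x ∈ t, 0 ≤ x) :
    H ζ (n - 1) s t
      = (-1) ^ s.sum *
        H ζ (n - 1) s.reverse (List.zipWith (fun a b => (a : ℤ) - b) s t).reverse :=
  stmt2_general n ζ hζ s t hlen
end

section
/- For any n-th primitive root of unity ζ and any non-negative integer r with r < n, z_n({1}^r; ζ) = (1/n)·C(n, r+1)·(1−ζ)^r, where C denotes the ordinary binomial coefficient. -/
open Finset

/-- Nested sum for `z_n`, recursing from the top index: the list is the
reversed tuple of exponents.  `zrev q n [s_r, …, s_1]`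
`= Σ_{1 ≤ k_1 < ⋯ < k_r ≤ n} ∏ q^{(s_i-1)k_i}/[k_i]_q^{s_i}`. -/
noncomputable def zrev (q : ℂ) : ℕ → List ℕ → ℂ
  | _, [] => 1
  | n, s :: rest =>
      ∑ k ∈ Finset.Icc 1 n, q ^ ((s - 1) * k) / qnum q k ^ s * zrev q (k - 1) rest

/-- `z n s ζ = z_n(s; ζ) = Σ_{1 ≤ k_1 < ⋯ < k_r ≤ n-1} ζ^{Σ (s_i-1)k_i} / ∏ [k_i]_ζ^{s_i}`. -/
noncomputable def z (ζ : ℂ) (n : ℕ) (s : List ℕ) : ℂ := zrev ζ (n - 1) s.reverse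

/-!
Since `[k]_ζ⁻¹ = (1 - ζ) / (1 - ζ^k)`, the sum `z_n({1}^r; ζ)` is `(1 - ζ)^r` times the `r`-th
elementary symmetric function of the inverses of `x_k = 1 - ζ^k`, `1 ≤ k ≤ n - 1`, which by
complementation is `e_{n-1-r}(x) / e_{n-1}(x)`. Substituting `X + 1` into
`X^n - 1 = ∏_{k < n} (X - ζ^k)` gives `X · ∏_{k=1}^{n-1} (X + x_k) = (X + 1)^n - 1`, so by Vieta
`e_{n-1-r}(x) = C(n, r+1)`; in particular `∏ x_k = n`.
-/

open Polynomial

theorem sum_powersetCard_succ_Icc {R : Type*} [CommSemiring R] (g : ℕ → R) (r m : ℕ) :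
    ∑ A ∈ (Icc 1 m).powersetCard (r + 1), ∏ j ∈ A, g j
      = ∑ k ∈ Icc 1 m, g k * ∑ A ∈ (Icc 1 (k - 1)).powersetCard r, ∏ j ∈ A, g j := by
  induction m with
  | zero => rw [powersetCard_eq_empty.2 (by simp)]; simp
  | succ m ih =>
    have hnot : m + 1 ∉ Icc 1 m := by simp
    have hIcc : Icc 1 (m + 1) = insert (m + 1) (Icc 1 m) := by ext; simp; omega
    have hfresh {A} (hA : A ∈ (Icc 1 m).powersetCard r) : m + 1 ∉ A :=
      fun h => hnot ((mem_powersetCard.1 hA).1 h)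
    rw [sum_Icc_succ_top (by omega), ← ih, Nat.add_sub_cancel, hIcc,
      powersetCard_succ_insert hnot, sum_union, sum_image]
    · rw [mul_sum]
      exact congrArg _ (sum_congr rfl fun A hA => prod_insert (hfresh hA))
    · intro A hA B hB h
      rw [← erase_insert (hfresh hA), ← erase_insert (hfresh hB)]
      exact congrArg (Finset.erase · _) h
    · refine disjoint_left.2 fun A hA hA' => ?_
      obtain ⟨B, -, rfl⟩ := mem_image.1 hA'
      exact hnot ((mem_powersetCard.1 hA).1 (mem_insert_self _ _))

theorem sum_powersetCard_prod_inv {K ι : Type*} [Field K] [DecidableEq ι] (s : Finset ι)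
    (f : ι → K) (hf : ∀ k ∈ s, f k ≠ 0) {r : ℕ} (hr : r ≤ #s) :
    ∑ A ∈ s.powersetCard r, ∏ k ∈ A, (f k)⁻¹
      = (∑ B ∈ s.powersetCard (#s - r), ∏ k ∈ B, f k) / ∏ k ∈ s, f k := by
  rw [sum_div]
  refine sum_nbij' (s \ ·) (s \ ·) (fun A hA => ?_) (fun B hB => ?_)
    (fun A hA => Finset.sdiff_sdiff_eq_self (mem_powersetCard.1 hA).1)
    (fun B hB => Finset.sdiff_sdiff_eq_self (mem_powersetCard.1 hB).1) (fun A hA => ?_)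
  · obtain ⟨hsub, hcard⟩ := mem_powersetCard.1 hA
    exact mem_powersetCard.2 ⟨sdiff_subset, by rw [card_sdiff_of_subset hsub, hcard]⟩
  · obtain ⟨hsub, hcard⟩ := mem_powersetCard.1 hB
    exact mem_powersetCard.2 ⟨sdiff_subset, by rw [card_sdiff_of_subset hsub, hcard]; omega⟩
  · have hsub := (mem_powersetCard.1 hA).1
    have hcompl : ∏ k ∈ s \ A, f k ≠ 0 :=
      prod_ne_zero_iff.2 fun k hk => hf k (mem_sdiff.1 hk).1
    rw [prod_inv_distrib, ← prod_sdiff hsub, div_mul_cancel_left₀ hcompl]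

section RootsOfUnity

variable {R : Type*} [CommRing R] [IsDomain R] {ζ : R} {m : ℕ}

theorem X_mul_prod_X_add_C_one_sub_pow (hζ : IsPrimitiveRoot ζ (m + 1)) :
    X * ∏ k ∈ Icc 1 m, (X + C (1 - ζ ^ k)) = (X + 1 : R[X]) ^ (m + 1) - 1 := by
  have h := congrArg (aeval (X + 1 : R[X])) (X_pow_sub_C_eq_prod hζ m.succ_pos (one_pow (m + 1)))
  simp only [map_sub, map_pow, aeval_X, aeval_C, map_prod, mul_one, algebraMap_eq, map_one] at h
  rw [h, prod_range_succ', ← Finset.Ico_add_one_right_eq_Icc, prod_Ico_eq_prod_range]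
  simp only [pow_zero, add_sub_cancel_right, Nat.add_sub_cancel]
  rw [mul_comm]
  congr 1
  refine prod_congr rfl fun i _ => ?_
  rw [map_sub, map_one, map_pow]; ring

theorem sum_powersetCard_prod_one_sub_pow (hζ : IsPrimitiveRoot ζ (m + 1)) {r : ℕ} (hr : r ≤ m) :
    ∑ A ∈ (Icc 1 m).powersetCard (m - r), ∏ k ∈ A, (1 - ζ ^ k) = (m + 1).choose (r + 1) := by
  have hcoeff := prod_X_add_C_coeff (Icc 1 m) (fun k => 1 - ζ ^ k) (k := r) (by simpa)
  rw [Nat.card_Icc, Nat.add_sub_cancel] at hcoeff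
  rw [← hcoeff, ← coeff_X_mul,
    X_mul_prod_X_add_C_one_sub_pow hζ, coeff_sub, coeff_X_add_one_pow, coeff_one]
  simp

theorem prod_one_sub_pow (hζ : IsPrimitiveRoot ζ (m + 1)) :
    ∏ k ∈ Icc 1 m, (1 - ζ ^ k) = m + 1 := by
  have h := sum_powersetCard_prod_one_sub_pow hζ m.zero_le
  have hself : (Icc 1 m).powersetCard m = {Icc 1 m} := by
    simpa using powersetCard_self (Icc 1 m)
  rwa [Nat.sub_zero, hself, sum_singleton, Nat.choose_one_right, Nat.cast_succ] at h

end RootsOfUnity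

theorem zrev_replicate_one (q : ℂ) (r m : ℕ) :
    zrev q m (List.replicate r 1)
      = (1 - q) ^ r * ∑ A ∈ (Icc 1 m).powersetCard r, ∏ k ∈ A, (1 - q ^ k)⁻¹ := by
  induction r generalizing m with
  | zero => simp [zrev]
  | succ r ih =>
    rw [List.replicate_succ, zrev, sum_powersetCard_succ_Icc, mul_sum]
    refine sum_congr rfl fun k _ => ?_
    rw [ih, Nat.sub_self, zero_mul, pow_zero, pow_one, one_div, qnum, inv_div]
    ring

theorem stmt4_general (n r : ℕ) (hr : r < n) (ζ : ℂ) (hζ : IsPrimitiveRoot ζ n) :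
    z ζ n (List.replicate r 1)
      = (1 / (n : ℂ)) * (n.choose (r + 1) : ℂ) * (1 - ζ) ^ r := by
  obtain ⟨m, rfl⟩ : ∃ m, n = m + 1 := ⟨n - 1, by omega⟩
  have hζk : ∀ k ∈ Icc 1 m, 1 - ζ ^ k ≠ 0 := fun k hk => by
    obtain ⟨hk1, hkm⟩ := mem_Icc.1 hk
    exact sub_ne_zero.2 (hζ.pow_ne_one_of_pos_of_lt (by omega) (by omega)).symm
  rw [z, List.reverse_replicate, Nat.add_sub_cancel, zrev_replicate_one,
    sum_powersetCard_prod_inv _ _ hζk (by simpa using Nat.le_of_lt_succ hr), Nat.card_Icc,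
    Nat.add_sub_cancel, sum_powersetCard_prod_one_sub_pow hζ (by omega), prod_one_sub_pow hζ]
  push_cast
  ring

theorem stmt4 (n r : ℕ) (hn : 0 < n) (hr : r < n) (ζ : ℂ) (hζ : IsPrimitiveRoot ζ n) :
    z ζ n (List.replicate r 1)
      = (1 / (n : ℂ)) * (n.choose (r + 1) : ℂ) * (1 - ζ) ^ r :=
  stmt4_general n r hr ζ hζ
end

section
/- For any n-th primitive root of unity ζ and any non-negative integer r with r < n, z_n({2}^r; ζ) = ((−1)^r/(n(r+1)))·C(n+r, 2r+1)·(1−ζ)^{2r}. -/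
/-!
Put `a_k = ζ^k / (1 - ζ^k)^2`. Since `ζ^k / [k]_ζ^2 = (1 - ζ)^2 a_k`, the sum `z_n({2}^r; ζ)`
is `(1 - ζ)^{2r}` times the coefficient of `x^r` in `∏_{0<k<n} (1 + a_k x)`. Every `x` can be
written as `2 - (u + v)` with `u v = 1`, and then
`(1 - ζ^k)^2 (1 + a_k x) = (1 - ζ^k u)(1 - ζ^k v)`; multiplying over all `n`-th roots of unity
gives the polynomial identity `n^2 x ∏_{0<k<n} (1 + a_k x) = 2 - (u^n + v^n) = 2 - D_n(2 - x)`,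
with `D_n` the Dickson polynomial. The coefficients of `D_n(2 - X)` follow from its three-term
recurrence, and `(r + 1) [X^{r+1}] D_n(2 - X) = ± n C(n+r, 2r+1)`.
-/

open Finset

open Polynomial

lemma zrev_succ_replicate_two (q : ℂ) (m r : ℕ) :
    zrev q (m + 1) (List.replicate (r + 1) 2)
      = zrev q m (List.replicate (r + 1) 2)
        + q ^ (m + 1) / qnum q (m + 1) ^ 2 * zrev q m (List.replicate r 2) := by
  simp only [List.replicate_succ, zrev]
  rw [Finset.sum_Icc_succ_top (by omega)]
  simp

lemma coeff_prod_one_add_C_mul_X_eq_zrev (q : ℂ) (m r : ℕ) :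
    (∏ k ∈ range m, (1 + C (q ^ (k + 1) / qnum q (k + 1) ^ 2) * X)).coeff r
      = zrev q m (List.replicate r 2) := by
  induction m generalizing r with
  | zero => cases r <;> simp [zrev, coeff_one, List.replicate_succ]
  | succ m ih =>
    rw [prod_range_succ, mul_add, mul_one, ← mul_assoc]
    cases r with
    | zero => simp [ih, zrev]
    | succ r => rw [coeff_add, coeff_mul_X, coeff_mul_C, ih, ih, zrev_succ_replicate_two, mul_comm]

-- `(-1)^k shiftedDicksonCoeff n k` is the coefficient of `X^k` in `D_n(2 - X)`; the truncated
-- `n + k - 1` matters only at `n = k = 0`, where it makes the constant term of `D_0 = 2` right.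
def shiftedDicksonCoeff (n k : ℕ) : ℕ := (n + k).choose (2 * k) + (n + k - 1).choose (2 * k)

lemma shiftedDicksonCoeff_eq_zero_of_lt {n k : ℕ} (h : n < k) : shiftedDicksonCoeff n k = 0 := by
  simp [shiftedDicksonCoeff, Nat.choose_eq_zero_of_lt, show n + k < 2 * k by omega,
    show n + k - 1 < 2 * k by omega]

lemma choose_add_three_add_choose (m j : ℕ) :
    (m + 3).choose (j + 2) + m.choose (j + 2)
      = (m + 2).choose (j + 2) + (m + 1).choose (j + 2) + (m + 1).choose j + m.choose j := by
  have h1 : (m + 3).choose (j + 2) = (m + 2).choose (j + 1) + (m + 2).choose (j + 2) :=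
    Nat.choose_succ_succ _ _
  have h2 : (m + 2).choose (j + 1) = (m + 1).choose j + (m + 1).choose (j + 1) :=
    Nat.choose_succ_succ _ _
  have h3 : (m + 1).choose (j + 1) = m.choose j + m.choose (j + 1) :=
    Nat.choose_succ_succ _ _
  have h4 : (m + 1).choose (j + 2) = m.choose (j + 1) + m.choose (j + 2) :=
    Nat.choose_succ_succ _ _
  omega

lemma shiftedDicksonCoeff_add_two_succ (n k : ℕ) :
    shiftedDicksonCoeff (n + 2) (k + 1) + shiftedDicksonCoeff n (k + 1)
      = 2 * shiftedDicksonCoeff (n + 1) (k + 1) + shiftedDicksonCoeff (n + 1) k := by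
  have h := choose_add_three_add_choose (n + k) (2 * k)
  simp only [shiftedDicksonCoeff, show n + 2 + (k + 1) = n + k + 3 by omega,
    show n + (k + 1) = n + k + 1 by omega, show n + 1 + (k + 1) = n + k + 2 by omega,
    show n + 1 + k = n + k + 1 by omega, show 2 * (k + 1) = 2 * k + 2 by omega,
    show n + k + 3 - 1 = n + k + 2 by omega, show n + k + 2 - 1 = n + k + 1 by omega,
    Nat.add_sub_cancel]
  omega

lemma succ_mul_shiftedDicksonCoeff_succ (n k : ℕ) :
    (k + 1) * shiftedDicksonCoeff n (k + 1) = n * (n + k).choose (2 * k + 1) := by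
  have hpascal : (n + k + 1).choose (2 * k + 2)
      = (n + k).choose (2 * k + 1) + (n + k).choose (2 * k + 2) := Nat.choose_succ_succ _ _
  have habsorb := Nat.choose_succ_right_eq (n + k) (2 * k + 1)
  simp only [shiftedDicksonCoeff, show n + (k + 1) = n + k + 1 by omega,
    show 2 * (k + 1) = 2 * k + 2 by omega, Nat.add_sub_cancel, hpascal]
  rcases le_or_gt n k with hnk | hkn
  · simp [Nat.choose_eq_zero_of_lt, show n + k < 2 * k + 1 by omega,
      show n + k < 2 * k + 2 by omega]
  · obtain ⟨d, rfl⟩ := Nat.exists_eq_add_of_lt hkn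
    rw [show k + d + 1 + k - (2 * k + 1) = d by omega] at habsorb
    linear_combination habsorb

section CommRing

variable {R : Type*} [CommRing R]

lemma coeff_dickson_one_one_comp_two_sub_X :
    ∀ n k : ℕ, ((dickson 1 (1 : R) n).comp (2 - X)).coeff k
      = (-1) ^ k * (shiftedDicksonCoeff n k : R)
  | 0, 0 => by norm_num [shiftedDicksonCoeff]
  | 0, k + 1 => by simp [coeff_one, shiftedDicksonCoeff_eq_zero_of_lt]
  | 1, 0 => by norm_num [shiftedDicksonCoeff]
  | 1, 1 => by norm_num [shiftedDicksonCoeff]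
  | 1, k + 2 => by simp [coeff_X, shiftedDicksonCoeff_eq_zero_of_lt]
  | n + 2, 0 => by
    norm_num [shiftedDicksonCoeff, mul_coeff_zero, coeff_dickson_one_one_comp_two_sub_X n 0,
      coeff_dickson_one_one_comp_two_sub_X (n + 1) 0]
  | n + 2, k + 1 => by
    have h := congrArg (Nat.cast (R := R)) (shiftedDicksonCoeff_add_two_succ n k)
    push_cast at h
    simp only [dickson_add_two, map_one, one_mul, sub_comp, mul_comp, X_comp, sub_mul, coeff_sub,
      coeff_ofNat_mul, coeff_X_mul, coeff_dickson_one_one_comp_two_sub_X n,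
      coeff_dickson_one_one_comp_two_sub_X (n + 1)]
    linear_combination (-(-1) ^ (k + 1)) * h

lemma IsPrimitiveRoot.prod_one_sub_pow_mul [IsDomain R] {ζ : R} {n : ℕ}
    (hζ : IsPrimitiveRoot ζ n) (hn : 0 < n) (y : R) :
    ∏ k ∈ range n, (1 - ζ ^ k * y) = 1 - y ^ n := by
  have := congrArg (eval 1) (X_pow_sub_C_eq_prod hζ hn (rfl : y ^ n = y ^ n))
  simpa [eval_prod] using this.symm

end CommRing

lemma IsPrimitiveRoot.mul_prod_one_add_div_one_sub_pow_sq {K : Type*} [Field K] {ζ : K} {m : ℕ}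
    (hζ : IsPrimitiveRoot ζ (m + 1)) {u v : K} (huv : u * v = 1) :
    (2 - (u + v)) * (m + 1) ^ 2
        * ∏ k ∈ range m, (1 + ζ ^ (k + 1) / (1 - ζ ^ (k + 1)) ^ 2 * (2 - (u + v)))
      = 2 - (u ^ (m + 1) + v ^ (m + 1)) := by
  set x := 2 - (u + v) with hx
  have hx' : x = (1 - u) * (1 - v) := by linear_combination -huv
  have hfactor : ∀ k ∈ range m,
      (1 - ζ ^ (k + 1)) ^ 2 * (1 + ζ ^ (k + 1) / (1 - ζ ^ (k + 1)) ^ 2 * x)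
        = (1 - ζ ^ (k + 1) * u) * (1 - ζ ^ (k + 1) * v) := by
    intro k hk
    have hne : 1 - ζ ^ (k + 1) ≠ 0 :=
      sub_ne_zero.2 (hζ.pow_ne_one_of_pos_of_lt k.succ_ne_zero (by simpa using hk)).symm
    rw [hx]
    field_simp
    linear_combination (-(ζ ^ (k + 1)) ^ 2) * huv
  calc x * (m + 1) ^ 2 * ∏ k ∈ range m, (1 + ζ ^ (k + 1) / (1 - ζ ^ (k + 1)) ^ 2 * x)
      = (1 - u) * (1 - v) * ∏ k ∈ range m, (1 - ζ ^ (k + 1) * u) * (1 - ζ ^ (k + 1) * v) := by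
        rw [← prod_congr rfl hfactor, prod_mul_distrib, prod_pow, hζ.prod_one_sub_pow_eq_order,
          hx']
        ring
    _ = (1 - u ^ (m + 1)) * (1 - v ^ (m + 1)) := by
        rw [← hζ.prod_one_sub_pow_mul m.succ_pos, ← hζ.prod_one_sub_pow_mul m.succ_pos,
          prod_range_succ', prod_range_succ', prod_mul_distrib]
        ring
    _ = 2 - (u ^ (m + 1) + v ^ (m + 1)) := by
        linear_combination (congrArg (· ^ (m + 1)) huv).trans (one_pow _)

lemma Complex.exists_mul_eq_one_add_eq (s : ℂ) : ∃ u v : ℂ, u * v = 1 ∧ u + v = s := by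
  obtain ⟨z, hz⟩ := Complex.cos_surjective (s / 2)
  refine ⟨exp (z * I), exp (-z * I), by rw [← exp_add, neg_mul, add_neg_cancel, exp_zero], ?_⟩
  rw [← Complex.two_cos, hz]
  ring

lemma IsPrimitiveRoot.C_mul_X_mul_prod_one_add_C_mul_X {ζ : ℂ} {m : ℕ}
    (hζ : IsPrimitiveRoot ζ (m + 1)) :
    C ((m + 1 : ℂ) ^ 2) * X
        * ∏ k ∈ range m, (1 + C (ζ ^ (k + 1) / (1 - ζ ^ (k + 1)) ^ 2) * X)
      = 2 - (dickson 1 (1 : ℂ) (m + 1)).comp (2 - X) := by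
  refine Polynomial.funext fun x => ?_
  obtain ⟨u, v, huv, hsum⟩ := Complex.exists_mul_eq_one_add_eq (2 - x)
  have hx : x = 2 - (u + v) := by rw [hsum]; ring
  simp only [eval_mul, eval_C, eval_X, eval_prod, eval_add, eval_one, eval_sub, eval_comp,
    eval_ofNat, ← hsum, dickson_one_one_eval_add_inv u v huv]
  rw [hx, ← hζ.mul_prod_one_add_div_one_sub_pow_sq huv]
  ring

lemma z_replicate_two_eq_coeff_prod (ζ : ℂ) (m r : ℕ) :
    z ζ (m + 1) (List.replicate r 2)
      = (∏ k ∈ range m, (1 + C (ζ ^ (k + 1) / (1 - ζ ^ (k + 1)) ^ 2) * X)).coeff r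
          * (1 - ζ) ^ (2 * r) := by
  rw [z, List.reverse_replicate, Nat.add_sub_cancel, ← coeff_prod_one_add_C_mul_X_eq_zrev,
    pow_mul, ← comp_C_mul_X_coeff, Polynomial.prod_comp]
  congr 1
  refine prod_congr rfl fun k _ => ?_
  have hscale : ζ ^ (k + 1) / qnum ζ (k + 1) ^ 2
      = ζ ^ (k + 1) / (1 - ζ ^ (k + 1)) ^ 2 * (1 - ζ) ^ 2 := by
    rw [qnum, div_pow, div_div_eq_mul_div, mul_div_right_comm]
  simp only [add_comp, one_comp, mul_comp, C_comp, X_comp, ← mul_assoc, ← C_mul, hscale]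

lemma IsPrimitiveRoot.coeff_prod_one_add_C_mul_X {ζ : ℂ} {m : ℕ}
    (hζ : IsPrimitiveRoot ζ (m + 1)) (r : ℕ) :
    (∏ k ∈ range m, (1 + C (ζ ^ (k + 1) / (1 - ζ ^ (k + 1)) ^ 2) * X)).coeff r
      = (-1) ^ r * (shiftedDicksonCoeff (m + 1) (r + 1) : ℂ) / (m + 1) ^ 2 := by
  rw [eq_div_iff (pow_ne_zero _ (Nat.cast_add_one_ne_zero m)), mul_comm]
  have hcoeff := congrArg (coeff · (r + 1)) hζ.C_mul_X_mul_prod_one_add_C_mul_X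
  simp only [mul_assoc, coeff_C_mul, coeff_X_mul, coeff_sub,
    coeff_dickson_one_one_comp_two_sub_X] at hcoeff
  rw [hcoeff]
  simp [pow_succ]

theorem stmt5_general (n r : ℕ) (hn : 0 < n) (ζ : ℂ) (hζ : IsPrimitiveRoot ζ n) :
    z ζ n (List.replicate r 2)
      = (-1) ^ r / ((n : ℂ) * (r + 1)) * ((n + r).choose (2 * r + 1) : ℂ)
          * (1 - ζ) ^ (2 * r) := by
  obtain ⟨m, rfl⟩ : ∃ m, n = m + 1 := ⟨n - 1, by omega⟩
  have hc := congrArg (Nat.cast (R := ℂ)) (succ_mul_shiftedDicksonCoeff_succ (m + 1) r)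
  push_cast at hc ⊢
  rw [z_replicate_two_eq_coeff_prod, hζ.coeff_prod_one_add_C_mul_X]
  field_simp
  linear_combination (1 - ζ) ^ (2 * r) * hc

theorem stmt5 (n r : ℕ) (hn : 0 < n) (hr : r < n) (ζ : ℂ) (hζ : IsPrimitiveRoot ζ n) :
    z ζ n (List.replicate r 2)
      = (-1) ^ r / ((n : ℂ) * (r + 1)) * ((n + r).choose (2 * r + 1) : ℂ)
          * (1 - ζ) ^ (2 * r) :=
  stmt5_general n r hn ζ hζ
end

section
/- Let n, s_1, …, s_r be positive integers and q a complex number with [k]_q ≠ 0 for 1 ≤ k ≤ n. Then Σ_{k=1}^{n} C_q(n,k)·(−1)^k·q^{k(k+1)/2}·Σ_{1 ≤ k_1 < ⋯ < k_r = k} ∏_{i=1}^{r} q^{(s_i−1)k_i}/[k_i]_q^{s_i} = (−1)^r·Σ ∏_{i=1}^{w} q^{j_i}/[j_i]_q, where w = s_1+⋯+s_r and the sum on the right is over all 1 ≤ j_1 ≤ j_2 ≤ ⋯ ≤ j_w ≤ n satisfying j_i < j_{i+1} whenever i ∈ I = {s_1, s_1+s_2, …, s_1+⋯+s_{r−1}}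 (and j_i ≤ j_{i+1} otherwise). -/
open Finset

/-- The Gaussian (q-)binomial coefficient `C_q(m,k) = ∏_{j=1}^k [m-j+1]_q/[j]_q`. -/
noncomputable def qbin (q : ℂ) (m k : ℕ) : ℂ :=
  ∏ j ∈ Finset.Icc 1 k, qnum q (m - j + 1) / qnum q j

/-- Nested mixed-inequality sum, recursing from the top index `j_w` down.
Each `Bool` says whether the next lower index must be strictly smaller
(`true`) or only weakly smaller (`false`). -/
noncomputable def mixed (q : ℂ) : ℕ → List Bool → ℂ
  | _, [] => 1
  | n, b :: bs =>
      ∑ j ∈ Finset.Icc 1 n, q ^ j / qnum q j * mixed q (if b then j - 1 else j) bs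

/-- The strictness pattern determined by the composition `s = (s_1,…,s_r)`:
reading the indices `j_w, …, j_1` from the top, inequalities are weak inside
each block `s_i` and strict between blocks (positions `I = {s_1, s_1+s_2, …}`). -/
def pattern (s : List ℕ) : List Bool :=
  s.reverse.flatMap fun si => List.replicate (si - 1) false ++ [true]


/-!
Write the left side as the q-binomial transform
`T(n, s, f) = Σ_k C_q(n,k) (-1)^k q^(k(k-1)/2) (q^k/[k]_q)^s f(k)` of
`f(k) = Σ_{k_1 < ⋯ < k_{r-1} < k} ∏ q^((s_i-1)k_i)/[k_i]_q^(s_i)`.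
The q-Pascal rule `C_q(n+1,k) q^k/[k] = C_q(n,k) q^k/[k] + q^(n+1)/[n+1] C_q(n+1,k)` gives
`T(n+1, s+1, f) = T(n, s+1, f) + q^(n+1)/[n+1] T(n+1, s, f)`, which is the recursion of the
mixed sum in its top index `j_w = n+1` with a weak inequality below it. When the weight is used
up (`s = 0`), exchanging the order of summation and the alternating partial sums
`Σ_{k ≤ m} C_q(n+1,k) (-1)^k q^(k(k-1)/2) = (-1)^m q^(m(m+1)/2) C_q(n,m)` turn `T(n+1, 0, f)` into
`-T(n, s_{r-1}, ·)` for the shorter tuple: a strict inequality closing the block.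
The theorem follows by induction on `n` and, for fixed `n`, on `s_r`.
-/

lemma qnum_add (q : ℂ) (a b : ℕ) : qnum q (a + b) = qnum q a + q ^ a * qnum q b := by
  simp only [qnum, pow_add]
  ring

noncomputable def qfact (q : ℂ) (n : ℕ) : ℂ := ∏ j ∈ Icc 1 n, qnum q j

lemma qfact_zero (q : ℂ) : qfact q 0 = 1 := rfl

lemma qfact_succ (q : ℂ) (n : ℕ) : qfact q (n + 1) = qfact q n * qnum q (n + 1) :=
  prod_Icc_succ_top (by omega) _

lemma qbin_zero_right (q : ℂ) (n : ℕ) : qbin q n 0 = 1 := by simp [qbin]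

section
variable {q : ℂ} {n : ℕ}

lemma qfact_ne_zero (hq : ∀ j, 1 ≤ j → j ≤ n → qnum q j ≠ 0) {m : ℕ} (hm : m ≤ n) :
    qfact q m ≠ 0 :=
  prod_ne_zero_iff.mpr fun j hj => hq j (mem_Icc.mp hj).1 ((mem_Icc.mp hj).2.trans hm)

lemma qbin_succ_right (k : ℕ) (hk : k < n) :
    qbin q n (k + 1) = qbin q n k * (qnum q (n - k) / qnum q (k + 1)) := by
  rw [qbin, prod_Icc_succ_top (by omega), ← qbin, show n - (k + 1) + 1 = n - k by omega]

lemma qbin_eq_qfact_div (hq : ∀ j, 1 ≤ j → j ≤ n → qnum q j ≠ 0) {k : ℕ} (hk : k ≤ n) :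
    qbin q n k = qfact q n / (qfact q k * qfact q (n - k)) := by
  induction k with
  | zero => simp [qbin, qfact_zero, div_self (qfact_ne_zero hq le_rfl)]
  | succ k ih =>
    have hsplit : qfact q (n - k) = qfact q (n - (k + 1)) * qnum q (n - k) := by
      obtain ⟨m, hm⟩ : ∃ m, n - k = m + 1 := ⟨n - (k + 1), by omega⟩
      rw [hm, qfact_succ, show n - (k + 1) = m by omega]
    have := qfact_ne_zero hq (m := n - (k + 1)) (by omega)
    have := qfact_ne_zero hq (m := k) (by omega)
    have := hq (k + 1) (by omega) hk
    have := hq (n - k) (by omega) (by omega)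
    rw [qbin_succ_right k hk, ih (by omega), hsplit, qfact_succ]
    field_simp

lemma qbin_succ_succ (hq : ∀ j, 1 ≤ j → j ≤ n + 1 → qnum q j ≠ 0) {k : ℕ} (hk : k < n) :
    qbin q (n + 1) (k + 1) = qbin q n k + q ^ (k + 1) * qbin q n (k + 1) := by
  have hq' : ∀ j, 1 ≤ j → j ≤ n → qnum q j ≠ 0 := fun j h1 h2 => hq j h1 (by omega)
  obtain ⟨m, rfl⟩ : ∃ m, n = k + 1 + m := ⟨n - (k + 1), by omega⟩
  rw [qbin_eq_qfact_div hq (by omega), qbin_eq_qfact_div hq' (by omega),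
    qbin_eq_qfact_div hq' (k := k + 1) (by omega), show k + 1 + m + 1 - (k + 1) = m + 1 by omega,
    show k + 1 + m - k = m + 1 by omega, Nat.add_sub_cancel_left, qfact_succ q (k + 1 + m),
    qfact_succ q m, qfact_succ q k]
  have := qfact_ne_zero hq' (m := k) (by omega)
  have := qfact_ne_zero hq' (m := m) (by omega)
  have := qfact_ne_zero hq' (m := k + 1 + m) le_rfl
  have := hq (k + 1) (by omega) (by omega)
  have := hq (m + 1) (by omega) (by omega)
  field_simp
  rw [show k + 1 + m + 1 = (k + 1) + (m + 1) by ring, qnum_add]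
  ring

lemma qbin_succ_mul_pow_div (hq : ∀ j, 1 ≤ j → j ≤ n + 1 → qnum q j ≠ 0) {k : ℕ}
    (hk₁ : 1 ≤ k) (hk₂ : k ≤ n) :
    qbin q (n + 1) k * (q ^ k / qnum q k)
      = qbin q n k * (q ^ k / qnum q k) + q ^ (n + 1) / qnum q (n + 1) * qbin q (n + 1) k := by
  have hq' : ∀ j, 1 ≤ j → j ≤ n → qnum q j ≠ 0 := fun j h1 h2 => hq j h1 (by omega)
  obtain ⟨m, rfl⟩ : ∃ m, n = k + m := ⟨n - k, by omega⟩
  rw [qbin_eq_qfact_div hq (by omega), qbin_eq_qfact_div hq' (by omega),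
    show k + m + 1 - k = m + 1 by omega, Nat.add_sub_cancel_left, qfact_succ q (k + m),
    qfact_succ q m]
  have := qfact_ne_zero hq' (m := k) (by omega)
  have := qfact_ne_zero hq' (m := m) (by omega)
  have := qfact_ne_zero hq' (m := k + m) le_rfl
  have := hq k hk₁ (by omega)
  have := hq (m + 1) (by omega) (by omega)
  have := hq (k + m + 1) (by omega) le_rfl
  field_simp
  rw [show k + m + 1 = (m + 1) + k by ring, qnum_add]
  ring

lemma qbin_self (hq : ∀ j, 1 ≤ j → j ≤ n → qnum q j ≠ 0) : qbin q n n = 1 := by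
  rw [qbin_eq_qfact_div hq le_rfl, Nat.sub_self, qfact_zero, mul_one,
    div_self (qfact_ne_zero hq le_rfl)]

lemma sum_range_qbin_alternating (hq : ∀ j, 1 ≤ j → j ≤ n + 1 → qnum q j ≠ 0) {m : ℕ}
    (hm : m ≤ n) :
    ∑ k ∈ range (m + 1), qbin q (n + 1) k * (-1) ^ k * q ^ k.choose 2
      = (-1) ^ m * q ^ (m + 1).choose 2 * qbin q n m := by
  induction m with
  | zero => simp [qbin_zero_right]
  | succ m ih =>
    rw [sum_range_succ, ih (by omega), qbin_succ_succ hq hm, Nat.choose_succ_succ' (m + 1) 1,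
      Nat.choose_one_right]
    ring

lemma sum_Icc_qbin_alternating (hq : ∀ j, 1 ≤ j → j ≤ n + 1 → qnum q j ≠ 0) {m : ℕ}
    (hm : m ≤ n) :
    ∑ k ∈ Icc (m + 1) (n + 1), qbin q (n + 1) k * (-1) ^ k * q ^ k.choose 2
      = -((-1) ^ m * q ^ (m + 1).choose 2 * qbin q n m) := by
  have hfull : ∑ k ∈ range (n + 1 + 1), qbin q (n + 1) k * (-1) ^ k * q ^ k.choose 2 = 0 := by
    rw [sum_range_succ, sum_range_qbin_alternating hq le_rfl, qbin_self hq,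
      qbin_self fun j h1 h2 => hq j h1 (by omega)]
    ring
  rw [← sum_range_add_sum_Ico _ (show m + 1 ≤ n + 1 + 1 by omega),
    sum_range_qbin_alternating hq hm, Ico_add_one_right_eq_Icc] at hfull
  linear_combination hfull

end

noncomputable def qbinTransform (q : ℂ) (n s : ℕ) (f : ℕ → ℂ) : ℂ :=
  ∑ k ∈ Icc 1 n, qbin q n k * (-1) ^ k * q ^ k.choose 2 * (q ^ k / qnum q k) ^ s * f k

section
variable {q : ℂ} {n : ℕ}

lemma qbinTransform_zero_left (s : ℕ) (f : ℕ → ℂ) : qbinTransform q 0 s f = 0 := by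
  simp [qbinTransform]

lemma qbinTransform_succ (s : ℕ) (f : ℕ → ℂ) :
    qbinTransform q n (s + 1) f = ∑ k ∈ Icc 1 n,
      qbin q n k * (-1) ^ k * q ^ (k + 1).choose 2 * (q ^ (s * k) / qnum q k ^ (s + 1) * f k) := by
  refine sum_congr rfl fun k _ => ?_
  rw [Nat.choose_succ_succ', Nat.choose_one_right, div_pow, pow_mul']
  ring

lemma qbinTransform_succ_succ (hq : ∀ j, 1 ≤ j → j ≤ n + 1 → qnum q j ≠ 0) (s : ℕ)
    (f : ℕ → ℂ) :
    qbinTransform q (n + 1) (s + 1) f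
      = qbinTransform q n (s + 1) f + q ^ (n + 1) / qnum q (n + 1) * qbinTransform q (n + 1) s f := by
  unfold qbinTransform
  rw [sum_Icc_succ_top (by omega), sum_Icc_succ_top (by omega), mul_add, mul_sum, ← add_assoc,
    ← sum_add_distrib]
  congr 1
  · refine sum_congr rfl fun k hk => ?_
    have hk := mem_Icc.mp hk
    calc qbin q (n + 1) k * (-1) ^ k * q ^ k.choose 2 * (q ^ k / qnum q k) ^ (s + 1) * f k
        = qbin q (n + 1) k * (q ^ k / qnum q k)
            * ((-1) ^ k * q ^ k.choose 2 * (q ^ k / qnum q k) ^ s * f k) := by ring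
      _ = _ := by rw [qbin_succ_mul_pow_div hq hk.1 hk.2]; ring
  · ring

lemma qbinTransform_zero_sum_Icc (hq : ∀ j, 1 ≤ j → j ≤ n + 1 → qnum q j ≠ 0) (h : ℕ → ℂ) :
    qbinTransform q (n + 1) 0 (fun k => ∑ m ∈ Icc 1 (k - 1), h m)
      = -∑ m ∈ Icc 1 n, qbin q n m * (-1) ^ m * q ^ (m + 1).choose 2 * h m := by
  unfold qbinTransform
  simp only [pow_zero, mul_one, mul_sum]
  rw [sum_comm' (t' := Icc 1 n) (s' := fun m => Icc (m + 1) (n + 1))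
    (fun k m => by simp only [mem_Icc]; omega), ← sum_neg_distrib]
  refine sum_congr rfl fun m hm => ?_
  rw [← sum_mul, sum_Icc_qbin_alternating hq (mem_Icc.mp hm).2]
  ring

lemma qbinTransform_zero_one (hq : ∀ j, 1 ≤ j → j ≤ n + 1 → qnum q j ≠ 0) :
    qbinTransform q (n + 1) 0 (fun _ => 1) = -1 := by
  simpa [qbinTransform, qbin_zero_right] using sum_Icc_qbin_alternating hq (Nat.zero_le n)

lemma qbinTransform_zrev_cons (hq : ∀ j, 1 ≤ j → j ≤ n + 1 → qnum q j ≠ 0) (s : ℕ)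
    (t : List ℕ) :
    qbinTransform q (n + 1) 0 (fun k => zrev q (k - 1) ((s + 1) :: t))
      = -qbinTransform q n (s + 1) (fun k => zrev q (k - 1) t) := by
  simp only [zrev, Nat.add_sub_cancel]
  rw [qbinTransform_zero_sum_Icc hq, qbinTransform_succ]

end

lemma mixed_zero_left (q : ℂ) {bs : List Bool} (h : bs ≠ []) : mixed q 0 bs = 0 := by
  obtain ⟨b, bs, rfl⟩ := List.exists_cons_of_ne_nil h
  simp [mixed]

lemma mixed_succ_left (q : ℂ) (n : ℕ) (b : Bool) (bs : List Bool) :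
    mixed q (n + 1) (b :: bs)
      = mixed q n (b :: bs) + q ^ (n + 1) / qnum q (n + 1) * mixed q (if b then n else n + 1) bs := by
  rw [mixed, mixed, sum_Icc_succ_top (by omega)]
  rfl

lemma pattern_append_singleton (l : List ℕ) (s : ℕ) :
    pattern (l ++ [s + 1]) = List.replicate s false ++ true :: pattern l := by
  simp [pattern, List.reverse_append]

lemma pattern_append_one (l : List ℕ) : pattern (l ++ [1]) = true :: pattern l := by
  simp [pattern_append_singleton]

lemma pattern_append_add_two (l : List ℕ) (s : ℕ) :
    pattern (l ++ [s + 2]) = false :: pattern (l ++ [s + 1]) := by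
  simp [pattern_append_singleton, List.replicate_succ]

theorem qbinTransform_zrev {q : ℂ} {n : ℕ} (hq : ∀ j, 1 ≤ j → j ≤ n → qnum q j ≠ 0)
    (t : List ℕ) (ht : ∀ x ∈ t, 0 < x) (s : ℕ) :
    qbinTransform q n (s + 1) (fun k => zrev q (k - 1) t)
      = (-1) ^ (t.length + 1) * mixed q n (pattern (t.reverse ++ [s + 1])) := by
  induction n generalizing t s with
  | zero =>
    rw [qbinTransform_zero_left, mixed_zero_left q (by simp [pattern_append_singleton]), mul_zero]
  | succ n ih =>
    have hq' : ∀ j, 1 ≤ j → j ≤ n → qnum q j ≠ 0 := fun j h1 h2 => hq j h1 (by omega)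
    induction s with
    | zero =>
      suffices qbinTransform q (n + 1) 0 (fun k => zrev q (k - 1) t)
          = (-1) ^ (t.length + 1) * mixed q n (pattern t.reverse) by
        rw [qbinTransform_succ_succ hq, ih hq' t ht, this, pattern_append_one, mixed_succ_left]
        simp only [if_true]
        ring
      cases t with
      | nil =>
        rw [show (fun k => zrev q (k - 1) []) = fun _ => 1 from rfl, qbinTransform_zero_one hq]
        simp [pattern, mixed]
      | cons s' t =>
        obtain ⟨s, rfl⟩ : ∃ s, s' = s + 1 := ⟨s' - 1, by have := ht s' (by simp); omega⟩
        rw [qbinTransform_zrev_cons hq, ih hq' t (fun x hx => ht x (by simp [hx]))]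
        simp only [List.reverse_cons, List.length_cons]
        ring
    | succ s ihs =>
      rw [qbinTransform_succ_succ hq, ih hq' t ht, ihs, pattern_append_add_two, mixed_succ_left]
      simp only [Bool.false_eq_true, if_false]
      ring

/-- The tuple `(s_1, …, s_r)` is `l ++ [sr]`. -/
theorem stmt11_general (n : ℕ) (q : ℂ)
    (hq : ∀ k, 1 ≤ k → k ≤ n → qnum q k ≠ 0)
    (l : List ℕ) (sr : ℕ) (hsr : 0 < sr) (hl : ∀ x ∈ l, 0 < x) :
    ∑ k ∈ Finset.Icc 1 n,
        qbin q n k * (-1) ^ k * q ^ (k * (k + 1) / 2)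
          * (q ^ ((sr - 1) * k) / qnum q k ^ sr * zrev q (k - 1) l.reverse)
      = (-1) ^ (l.length + 1) * mixed q n (pattern (l ++ [sr])) := by
  obtain ⟨s, rfl⟩ : ∃ s, sr = s + 1 := ⟨sr - 1, by omega⟩
  have h := qbinTransform_zrev hq l.reverse (by simpa using hl) s
  rw [List.reverse_reverse, List.length_reverse, qbinTransform_succ] at h
  rw [← h, Nat.add_sub_cancel]
  refine sum_congr rfl fun k _ => ?_
  rw [Nat.choose_two_right, Nat.add_sub_cancel, mul_comm k]

/-- Theorem A of Hessami Pilehrood–Hessami Pilehrood–Tauraso: here the tuple is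
`s = (s_1, …, s_{r-1}, s_r)` with `(s_1, …, s_{r-1})` given by `l` and `s_r = sr`;
the inner sum over `1 ≤ k_1 < ⋯ < k_r = k` is written with the top index fixed. -/
theorem stmt11 (n : ℕ) (hn : 0 < n) (q : ℂ)
    (hq : ∀ k, 1 ≤ k → k ≤ n → qnum q k ≠ 0)
    (l : List ℕ) (sr : ℕ) (hsr : 0 < sr) (hl : ∀ x ∈ l, 0 < x) :
    ∑ k ∈ Finset.Icc 1 n,
        qbin q n k * (-1) ^ k * q ^ (k * (k + 1) / 2)
          * (q ^ ((sr - 1) * k) / qnum q k ^ sr * zrev q (k - 1) l.reverse)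
      = (-1) ^ (l.length + 1) * mixed q n (pattern (l ++ [sr])) :=
  stmt11_general n q hq l sr hsr hl
end

section
/- Let n, s_1, …, s_r be positive integers and ζ a primitive n-th root of unity. Then z_n(s; ζ) = (−1)^r · Σ ∏_{i=1}^{w} ζ^{j_i}/[j_i]_ζ, where w = s_1+⋯+s_r and the sum is over all integers 1 ≤ j_1 ≤ j_2 ≤ ⋯ ≤ j_w ≤ n−1 satisfying j_i < j_{i+1} for i ∈ I = {s_1, s_1+s_2, …, s_1+⋯+s_{r−1}} (and j_i ≤ j_{i+1} otherwise). -/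
open Finset

/-!
Put `X k = 1 / (1 - q ^ k)`. Then `q ^ ((s - 1) k) / [k] ^ s = -(q - 1) ^ s X k (1 - X k) ^ (s - 1)`
and, after the reflection `j ↦ n - j`, `q ^ j / [j] = (q - 1) X (n - j)`, so both sides of the
theorem become nested sums in the `X k`, and it remains to compare them. This is done by the
connected-sum method: the connector `C k t = (q;q)_(k+t) / (q ^ (k t) (q;q)_k (q;q)_t)` is `1` when
`k` or `t` is `0` and vanishes when `k + t ≥ n`, and the two telescoping identities
  `(1 - X k) C k t = ∑_{t < j < n} X j C k (j - 1)`,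
  `∑_{m < k < n} X k C k t = ∑_{t < j < n} X j C m j`
transfer one weak, resp. strict, inequality at a time from the left sum to the right sum while
the connected sum stays unchanged.
-/

theorem Finset.eq_sum_Icc_of_sub_succ {M : Type*} [AddCommGroup M] {f g : ℕ → M} {a N : ℕ}
    (hN : f N = 0) (hstep : ∀ j < N, f j - f (j + 1) = g (j + 1)) (ha : a ≤ N) :
    f a = ∑ j ∈ Icc (a + 1) N, g j := by
  refine Nat.decreasingInduction (motive := fun a _ => f a = ∑ j ∈ Icc (a + 1) N, g j)
    (fun j hj ih => ?_) (by simp [hN]) ha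
  rw [← insert_Icc_add_one_left_eq_Icc (by omega : j + 1 ≤ N), sum_insert (by simp), ← ih,
    ← hstep j hj, sub_add_cancel]

namespace CyclotomicMHS

section Field

variable {K : Type*} [Field K] {q : K} {n : ℕ}

def qPochhammer (q : K) (a : ℕ) : K := ∏ i ∈ range a, (1 - q ^ (i + 1))

@[simp]
lemma qPochhammer_zero (q : K) : qPochhammer q 0 = 1 := prod_range_zero _

lemma qPochhammer_succ (q : K) (a : ℕ) :
    qPochhammer q (a + 1) = qPochhammer q a * (1 - q ^ (a + 1)) :=
  prod_range_succ _ _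

lemma one_sub_pow_ne_zero (hq : IsPrimitiveRoot q n) {j : ℕ} (h0 : j ≠ 0) (hj : j < n) :
    1 - q ^ j ≠ 0 :=
  sub_ne_zero.mpr (hq.pow_ne_one_of_pos_of_lt h0 hj).symm

lemma qPochhammer_ne_zero (hq : IsPrimitiveRoot q n) {a : ℕ} (ha : a < n) :
    qPochhammer q a ≠ 0 :=
  prod_ne_zero_iff.mpr fun i hi => one_sub_pow_ne_zero hq (by omega) (by simp at hi; omega)

lemma qPochhammer_eq_zero (hq : q ^ n = 1) (hn : n ≠ 0) {a : ℕ} (ha : n ≤ a) :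
    qPochhammer q a = 0 :=
  prod_eq_zero (i := n - 1) (by simp; omega)
    (by rw [Nat.sub_add_cancel (by omega), hq, sub_self])

/-- `q ^ (-k t)` times the Gaussian binomial `[k + t, t]_q`. -/
def connector (q : K) (k t : ℕ) : K :=
  qPochhammer q (k + t) / (q ^ (k * t) * qPochhammer q k * qPochhammer q t)

lemma connector_comm (q : K) (k t : ℕ) : connector q k t = connector q t k := by
  simp only [connector, add_comm k, mul_comm k t, mul_right_comm _ (qPochhammer q k)]

lemma connector_succ_right (q : K) (k t : ℕ) :
    connector q k (t + 1)
      = connector q k t * ((1 - q ^ (k + t + 1)) / (q ^ k * (1 - q ^ (t + 1)))) := by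
  rw [connector, connector, ← add_assoc, qPochhammer_succ, qPochhammer_succ, mul_add_one, pow_add,
    ← mul_div_mul_comm]
  ring_nf

lemma connector_succ_left (q : K) (k t : ℕ) :
    connector q (k + 1) t
      = connector q k t * ((1 - q ^ (k + t + 1)) / (q ^ t * (1 - q ^ (k + 1)))) := by
  rw [connector_comm, connector_succ_right, connector_comm, add_comm t]

lemma connector_zero_right (hq : IsPrimitiveRoot q n) {k : ℕ} (hk : k < n) :
    connector q k 0 = 1 := by
  rw [connector, add_zero, mul_zero, pow_zero, one_mul, qPochhammer_zero, mul_one,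
    div_self (qPochhammer_ne_zero hq hk)]

lemma connector_zero_left (hq : IsPrimitiveRoot q n) {t : ℕ} (ht : t < n) :
    connector q 0 t = 1 := by
  rw [connector_comm, connector_zero_right hq ht]

lemma connector_eq_zero (hq : q ^ n = 1) (hn : n ≠ 0) {k t : ℕ} (h : n ≤ k + t) :
    connector q k t = 0 := by
  rw [connector, qPochhammer_eq_zero hq hn h, zero_div]

def invOneSubPow (q : K) (k : ℕ) : K := (1 - q ^ k)⁻¹

lemma one_sub_invOneSubPow_mul_connector_sub (hq : IsPrimitiveRoot q n) {k t : ℕ} (hk0 : k ≠ 0)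
    (hk : k < n) (ht : t + 1 < n) :
    (1 - invOneSubPow q k) * (connector q k t - connector q k (t + 1))
      = invOneSubPow q (t + 1) * connector q k t := by
  have hq0 := hq.ne_zero (by omega)
  have hqk := one_sub_pow_ne_zero hq hk0 hk
  have hqt := one_sub_pow_ne_zero hq (by omega) ht
  rw [connector_succ_right, invOneSubPow, invOneSubPow]
  field_simp
  ring

lemma connector_succ_left_sub_succ_right (hq : IsPrimitiveRoot q n) {m j : ℕ} (hm : m + 1 < n)
    (hj : j + 1 < n) :
    connector q (m + 1) j - connector q (m + 1) (j + 1)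
      = -((q ^ (j + 1))⁻¹ * connector q m (j + 1)) := by
  have hq0 := hq.ne_zero (by omega)
  have hqm := one_sub_pow_ne_zero hq (by omega) hm
  have hqj := one_sub_pow_ne_zero hq (by omega) hj
  rw [connector_succ_right q (m + 1), connector_succ_left, connector_succ_right q m]
  field_simp
  ring

lemma invOneSubPow_mul_connector_sub_succ_left (hq : IsPrimitiveRoot q n) {m j : ℕ}
    (hj0 : j ≠ 0) (hj : j < n) (hm : m + 1 < n) :
    invOneSubPow q j * (connector q m j - connector q (m + 1) j)
      = invOneSubPow q (m + 1) * -((q ^ j)⁻¹ * connector q m j) := by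
  have hq0 := hq.ne_zero (by omega)
  have hqm := one_sub_pow_ne_zero hq (by omega) hm
  have hqj := one_sub_pow_ne_zero hq hj0 hj
  rw [connector_succ_left, invOneSubPow, invOneSubPow]
  field_simp
  ring

lemma one_sub_invOneSubPow_mul_connector (hq : IsPrimitiveRoot q n) {k t : ℕ} (hk0 : k ≠ 0)
    (hk : k < n) (ht : t ≤ n - 1) :
    (1 - invOneSubPow q k) * connector q k t
      = ∑ j ∈ Icc (t + 1) (n - 1), invOneSubPow q j * connector q k (j - 1) := by
  refine eq_sum_Icc_of_sub_succ (f := fun t => (1 - invOneSubPow q k) * connector q k t)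
    ?_ (fun j hj => ?_) ht
  · rw [connector_eq_zero hq.pow_eq_one (by omega) (by omega), mul_zero]
  · rw [← mul_sub, one_sub_invOneSubPow_mul_connector_sub hq hk0 hk (by omega),
      Nat.add_sub_cancel]

lemma connector_succ_left_eq_sum (hq : IsPrimitiveRoot q n) {m t : ℕ} (hm : m + 1 < n)
    (ht : t ≤ n - 1) :
    connector q (m + 1) t = ∑ j ∈ Icc (t + 1) (n - 1), -((q ^ j)⁻¹ * connector q m j) :=
  eq_sum_Icc_of_sub_succ (connector_eq_zero hq.pow_eq_one (by omega) (by omega))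
    (fun _ hj => connector_succ_left_sub_succ_right hq hm (by omega)) ht

lemma sum_invOneSubPow_mul_connector (hq : IsPrimitiveRoot q n) {m t : ℕ} (hm : m ≤ n - 1)
    (ht : t ≤ n - 1) :
    ∑ k ∈ Icc (m + 1) (n - 1), invOneSubPow q k * connector q k t
      = ∑ j ∈ Icc (t + 1) (n - 1), invOneSubPow q j * connector q m j := by
  refine (eq_sum_Icc_of_sub_succ
    (f := fun m => ∑ j ∈ Icc (t + 1) (n - 1), invOneSubPow q j * connector q m j)
    ?_ (fun m hm => ?_) hm).symm
  · refine sum_eq_zero fun j hj => ?_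
    rw [mem_Icc] at hj
    rw [connector_eq_zero hq.pow_eq_one (by omega) (by omega), mul_zero]
  · simp only [← sum_sub_distrib, ← mul_sub]
    rw [sum_congr rfl fun j hj => invOneSubPow_mul_connector_sub_succ_left hq
      (by rw [mem_Icc] at hj; omega) (by rw [mem_Icc] at hj; omega) (by omega),
      ← mul_sum, connector_succ_left_eq_sum hq (by omega) ht]

def leftSum (q : K) : ℕ → List ℕ → K
  | _, [] => 1
  | m, s :: ρ =>
      ∑ k ∈ Icc 1 m, invOneSubPow q k * (1 - invOneSubPow q k) ^ (s - 1) * leftSum q (k - 1) ρ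

def rightSum (q : K) (n : ℕ) : ℕ → List Bool → K
  | _, [] => 1
  | a, b :: bs =>
      ∑ j ∈ Icc a (n - 1), invOneSubPow q j * rightSum q n (if b then j + 1 else j) bs

def block (s : ℕ) : List Bool := List.replicate (s - 1) false ++ [true]

def connectedSum (q : K) (n t e : ℕ) (ρ : List ℕ) : K :=
  ∑ k ∈ Icc 1 (n - 1),
    invOneSubPow q k * (1 - invOneSubPow q k) ^ e * leftSum q (k - 1) ρ * connector q k t

lemma connectedSum_succ (hq : IsPrimitiveRoot q n) {t : ℕ} (ht : t ≤ n - 1) (e : ℕ)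
    (ρ : List ℕ) :
    connectedSum q n t (e + 1) ρ
      = ∑ j ∈ Icc (t + 1) (n - 1), invOneSubPow q j * connectedSum q n (j - 1) e ρ := by
  have hterm : ∀ k ∈ Icc 1 (n - 1),
      invOneSubPow q k * (1 - invOneSubPow q k) ^ (e + 1) * leftSum q (k - 1) ρ * connector q k t
        = ∑ j ∈ Icc (t + 1) (n - 1), invOneSubPow q j * (invOneSubPow q k
          * (1 - invOneSubPow q k) ^ e * leftSum q (k - 1) ρ * connector q k (j - 1)) := by
    intro k hk
    rw [mem_Icc] at hk
    calc _ = invOneSubPow q k * (1 - invOneSubPow q k) ^ e * leftSum q (k - 1) ρ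
          * ((1 - invOneSubPow q k) * connector q k t) := by ring
      _ = _ := by
        rw [one_sub_invOneSubPow_mul_connector hq (by omega) (by omega) ht, mul_sum]
        exact sum_congr rfl fun j _ => by ring
  simp only [connectedSum, mul_sum]
  rw [sum_congr rfl hterm, sum_comm]

lemma connectedSum_zero_nil (hq : IsPrimitiveRoot q n) {t : ℕ} (ht : t ≤ n - 1) :
    connectedSum q n t 0 [] = ∑ j ∈ Icc (t + 1) (n - 1), invOneSubPow q j := by
  simp only [connectedSum, leftSum, pow_zero, mul_one]
  rw [sum_invOneSubPow_mul_connector hq (m := 0) (by omega) ht]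
  exact sum_congr rfl fun j hj => by
    rw [connector_zero_left hq (by rw [mem_Icc] at hj; omega), mul_one]

lemma connectedSum_zero_cons (hq : IsPrimitiveRoot q n) {t : ℕ} (ht : t ≤ n - 1) (s : ℕ)
    (ρ : List ℕ) :
    connectedSum q n t 0 (s :: ρ)
      = ∑ j ∈ Icc (t + 1) (n - 1), invOneSubPow q j * connectedSum q n j (s - 1) ρ := by
  set term := fun k => invOneSubPow q k * (1 - invOneSubPow q k) ^ (s - 1) * leftSum q (k - 1) ρ
  calc connectedSum q n t 0 (s :: ρ)
      = ∑ k ∈ Icc 1 (n - 1), ∑ k' ∈ Icc 1 (k - 1),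
          term k' * (invOneSubPow q k * connector q k t) := by
        simp only [connectedSum, leftSum, pow_zero, mul_one, sum_mul, mul_sum]
        exact sum_congr rfl fun k _ => sum_congr rfl fun k' _ => by ring
    _ = ∑ k' ∈ Icc 1 (n - 1), term k'
          * ∑ k ∈ Icc (k' + 1) (n - 1), invOneSubPow q k * connector q k t := by
        simp only [mul_sum]
        exact sum_comm' fun k k' => by simp only [mem_Icc]; omega
    _ = ∑ k' ∈ Icc 1 (n - 1), term k'
          * ∑ j ∈ Icc (t + 1) (n - 1), invOneSubPow q j * connector q k' j := by
        exact sum_congr rfl fun k' hk' => by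
          rw [sum_invOneSubPow_mul_connector hq (by rw [mem_Icc] at hk'; omega) ht]
    _ = _ := by
        simp only [connectedSum, mul_sum]
        rw [sum_comm]
        exact sum_congr rfl fun j _ => sum_congr rfl fun k' _ => by ring

lemma connectedSum_eq_rightSum_of_zero (hq : IsPrimitiveRoot q n) {ρ : List ℕ}
    (h0 : ∀ t ≤ n - 1, connectedSum q n t 0 ρ = rightSum q n (t + 1) ((1 :: ρ).flatMap block))
    (e : ℕ) {t : ℕ} (ht : t ≤ n - 1) :
    connectedSum q n t e ρ = rightSum q n (t + 1) (((e + 1) :: ρ).flatMap block) := by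
  induction e generalizing t with
  | zero => exact h0 t ht
  | succ e ih =>
    rw [connectedSum_succ hq ht]
    refine sum_congr rfl fun j hj => ?_
    rw [mem_Icc] at hj
    rw [ih (by omega), Nat.sub_add_cancel (by omega)]
    rfl

theorem connectedSum_eq_rightSum (hq : IsPrimitiveRoot q n) {ρ : List ℕ}
    (hρ : ∀ s ∈ ρ, 0 < s) (e : ℕ) {t : ℕ} (ht : t ≤ n - 1) :
    connectedSum q n t e ρ = rightSum q n (t + 1) (((e + 1) :: ρ).flatMap block) := by
  induction ρ generalizing e t with
  | nil =>
    refine connectedSum_eq_rightSum_of_zero hq (fun t ht => ?_) e ht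
    rw [connectedSum_zero_nil hq ht]
    simp [block, rightSum]
  | cons s ρ ih =>
    refine connectedSum_eq_rightSum_of_zero hq (fun t ht => ?_) e ht
    rw [connectedSum_zero_cons hq ht]
    refine sum_congr rfl fun j hj => ?_
    rw [mem_Icc] at hj
    rw [ih (fun x hx => hρ x (List.mem_cons_of_mem s hx)) (s - 1) (by omega),
      Nat.sub_add_cancel (hρ s List.mem_cons_self)]
    rfl

theorem leftSum_eq_rightSum (hq : IsPrimitiveRoot q n) {σ : List ℕ} (hσ : ∀ s ∈ σ, 0 < s) :
    leftSum q (n - 1) σ = rightSum q n 1 (σ.flatMap block) := by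
  cases σ with
  | nil => rfl
  | cons s ρ =>
    have hρ : ∀ x ∈ ρ, 0 < x := fun x hx => hσ x (List.mem_cons_of_mem s hx)
    rw [← Nat.sub_add_cancel (hσ s List.mem_cons_self),
      ← connectedSum_eq_rightSum hq hρ _ (by omega)]
    refine sum_congr rfl fun k hk => ?_
    rw [mem_Icc] at hk
    rw [connector_zero_right hq (by omega), mul_one, Nat.add_sub_cancel]

lemma length_flatMap_block {σ : List ℕ} (hσ : ∀ s ∈ σ, 0 < s) :
    (σ.flatMap block).length = σ.sum := by
  induction σ with
  | nil => rfl
  | cons s σ ih =>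
    simp only [List.flatMap_cons, List.length_append, block, List.length_replicate,
      List.length_singleton, List.sum_cons, ih (fun x hx => hσ x (List.mem_cons_of_mem s hx))]
    have := hσ s List.mem_cons_self
    omega

end Field

lemma pow_div_qnum_pow (q : ℂ) (k : ℕ) {s : ℕ} (hs : 0 < s) :
    q ^ ((s - 1) * k) / qnum q k ^ s
      = -(q - 1) ^ s * (invOneSubPow q k * (1 - invOneSubPow q k) ^ (s - 1)) := by
  obtain ⟨s, rfl⟩ : ∃ s', s = s' + 1 := ⟨s - 1, by omega⟩
  by_cases hk : 1 - q ^ k = 0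
  · simp [qnum, invOneSubPow, hk]
  have h1 : (1 - q) * invOneSubPow q k = (qnum q k)⁻¹ := by
    rw [qnum, invOneSubPow, inv_div, div_eq_mul_inv]
  have h2 : (q - 1) * (1 - invOneSubPow q k) = q ^ k / qnum q k := by
    rw [qnum, invOneSubPow]
    field_simp
    ring
  calc _ = (qnum q k)⁻¹ * (q ^ k / qnum q k) ^ s := by
        rw [Nat.add_sub_cancel, div_pow, ← pow_mul, mul_comm k]
        ring
    _ = _ := by
        rw [← h1, ← h2, mul_pow, Nat.add_sub_cancel]
        ring

lemma zrev_eq_leftSum (q : ℂ) (m : ℕ) {σ : List ℕ} (hσ : ∀ s ∈ σ, 0 < s) :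
    zrev q m σ = (-1) ^ σ.length * (q - 1) ^ σ.sum * leftSum q m σ := by
  induction σ generalizing m with
  | nil => simp [zrev, leftSum]
  | cons s σ ih =>
    simp only [zrev, leftSum, mul_sum]
    refine sum_congr rfl fun k _ => ?_
    rw [pow_div_qnum_pow q k (hσ s List.mem_cons_self),
      ih (k - 1) (fun x hx => hσ x (List.mem_cons_of_mem s hx))]
    simp only [List.length_cons, List.sum_cons]
    ring

lemma pow_div_qnum {q : ℂ} {n : ℕ} (hq : q ^ n = 1) {j : ℕ} (hj : j ≤ n) :
    q ^ j / qnum q j = (q - 1) * invOneSubPow q (n - j) := by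
  have hmul : q ^ (n - j) * q ^ j = 1 := by rw [← pow_add, Nat.sub_add_cancel hj, hq]
  by_cases h : q ^ j = 1
  · have : q ^ (n - j) = 1 := by simpa [h] using hmul
    simp [qnum, invOneSubPow, h, this]
  have hqj : q ^ j ≠ 0 := right_ne_zero_of_mul_eq_one hmul
  rw [qnum, invOneSubPow, eq_inv_of_mul_eq_one_left hmul]
  field_simp
  ring

lemma mixed_eq_rightSum {q : ℂ} {n : ℕ} (hq : q ^ n = 1) (bs : List Bool) {m : ℕ}
    (hm : m < n) :
    mixed q m bs = (q - 1) ^ bs.length * rightSum q n (n - m) bs := by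
  induction bs generalizing m with
  | nil => simp [mixed, rightSum]
  | cons b bs ih =>
    simp only [mixed, rightSum, mul_sum]
    refine sum_nbij' (fun j => n - j) (fun j => n - j) (fun j hj => ?_) (fun j hj => ?_)
      (fun j hj => ?_) (fun j hj => ?_) (fun j hj => ?_)
    all_goals simp only [mem_Icc] at hj ⊢
    any_goals omega
    rw [pow_div_qnum hq (by omega), ih (by split_ifs <;> omega), List.length_cons]
    have : n - (if b then j - 1 else j) = if b then n - j + 1 else n - j := by split_ifs <;> omega
    rw [this]
    ring

end CyclotomicMHS

theorem stmt12_general (n : ℕ) (hn : 0 < n) (ζ : ℂ) (hζ : IsPrimitiveRoot ζ n)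
    (s : List ℕ) (hpos : ∀ x ∈ s, 0 < x) :
    z ζ n s = (-1) ^ s.length * mixed ζ (n - 1) (pattern s) := by
  open CyclotomicMHS in
  have hrev : ∀ x ∈ s.reverse, 0 < x := by simpa using hpos
  have hpattern : pattern s = s.reverse.flatMap block := rfl
  rw [z, zrev_eq_leftSum ζ _ hrev, leftSum_eq_rightSum hζ hrev,
    mixed_eq_rightSum hζ.pow_eq_one _ (by omega), Nat.sub_sub_self (by omega : 1 ≤ n), hpattern,
    length_flatMap_block hrev, List.length_reverse, List.sum_reverse]
  ring

theorem stmt12 (n : ℕ) (hn : 0 < n) (ζ : ℂ) (hζ : IsPrimitiveRoot ζ n)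
    (s : List ℕ) (hs : s ≠ []) (hpos : ∀ x ∈ s, 0 < x) :
    z ζ n s = (-1) ^ s.length * mixed ζ (n - 1) (pattern s) :=
  stmt12_general n hn ζ hζ s hpos
end

section
/- For all non-negative integers a, b and any n-th primitive root of unity ζ, z_n({2}^a, 3, {2}^b; ζ) + (1−ζ)·z_n({2}^{a+b+1}; ζ) = −z_n({2}^b, 3, {2}^a; ζ). -/
open Finset

/-!
Reflecting every summation index `k ↦ n - k` reverses the order of the indices, and since
`ζ ^ n = 1` gives `[n - k] = -ζ ^ (n - k) [k]`, the factor `ζ ^ ((s - 1)(n - k)) / [n - k] ^ s`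
becomes `(-1) ^ s ζ ^ k / [k] ^ s`. Hence `z_n(s)` is `(-1) ^ (Σ sᵢ)` times the nested sum over the
reversed tuple with factors `ζ ^ k / [k] ^ s`. For `s = 2` these are the factors of `z_n`; for
`s = 3`, `ζ ^ k - ζ ^ (2k) = (1 - ζ) ζ ^ k [k]` splits `ζ ^ k / [k] ^ 3` into
`ζ ^ (2k) / [k] ^ 3 + (1 - ζ) ζ ^ k / [k] ^ 2`, and the nested sum is linear in each slot.
-/

section NestedSum

variable {R : Type*} [CommSemiring R]

/-- `nestedSum n [f₁, …, f_r] = Σ_{n ≥ k₁ > k₂ > ⋯ > k_r ≥ 1} f₁ k₁ ⋯ f_r k_r`. -/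
def nestedSum : ℕ → List (ℕ → R) → R
  | _, [] => 1
  | n, f :: L => ∑ k ∈ Icc 1 n, f k * nestedSum (k - 1) L

@[simp]
theorem nestedSum_nil (n : ℕ) : nestedSum n ([] : List (ℕ → R)) = 1 := rfl

theorem nestedSum_cons (n : ℕ) (f : ℕ → R) (L : List (ℕ → R)) :
    nestedSum n (f :: L) = ∑ k ∈ Icc 1 n, f k * nestedSum (k - 1) L := rfl

theorem nestedSum_append_singleton (L : List (ℕ → R)) (g : ℕ → R) (n : ℕ) :
    nestedSum n (L ++ [g]) =
      ∑ k ∈ Icc 1 n, g k * nestedSum (n - k) (L.map fun f j => f (j + k)) := by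
  induction L generalizing n with
  | nil => simp [nestedSum_cons]
  | cons f L ih =>
    simp only [List.cons_append, nestedSum_cons, ih, mul_sum, List.map_cons]
    rw [sum_sigma', sum_sigma']
    refine sum_bij' (fun p _ => ⟨p.2, p.1 - p.2⟩) (fun p _ => ⟨p.1 + p.2, p.1⟩)
      ?_ ?_ ?_ ?_ ?_ <;> simp only [mem_sigma, mem_Icc, and_imp, Sigma.forall]
    · omega
    · omega
    · intro m k _ _ _ _; congr; omega
    · intro m k _ _ _ _; congr; omega
    · intro m k _ _ _ _
      rw [Nat.sub_add_cancel (by omega), Nat.sub_right_comm]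
      ring

theorem nestedSum_reverse (L : List (ℕ → R)) (n : ℕ) :
    nestedSum n L = nestedSum n (L.reverse.map fun f k => f (n + 1 - k)) := by
  induction L generalizing n with
  | nil => rfl
  | cons f L ih =>
    rw [nestedSum_cons, List.reverse_cons, List.map_append, List.map_singleton,
      nestedSum_append_singleton]
    refine sum_nbij' (fun k => n + 1 - k) (fun k => n + 1 - k) ?_ ?_ ?_ ?_ ?_ <;>
      simp only [mem_Icc]
    · omega
    · omega
    · omega
    · omega
    · intro k hk
      rw [ih (k - 1), show n + 1 - (n + 1 - k) = k by omega,
        show n - (n + 1 - k) = k - 1 by omega, List.map_map]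
      congr 3
      funext g j
      simp only [Function.comp_apply]
      congr 1
      omega

theorem nestedSum_map_congr {ι : Type*} {l : List ι} {n : ℕ} {φ ψ : ι → ℕ → R}
    (h : ∀ i ∈ l, ∀ k ∈ Icc 1 n, φ i k = ψ i k) :
    nestedSum n (l.map φ) = nestedSum n (l.map ψ) := by
  induction l generalizing n with
  | nil => rfl
  | cons i l ih =>
    simp only [List.map_cons, nestedSum_cons]
    refine sum_congr rfl fun k hk => ?_
    rw [h i List.mem_cons_self k hk, ih fun j hj m hm => h j (List.mem_cons_of_mem i hj) m ?_]
    simp only [mem_Icc] at hk hm ⊢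
    omega

theorem nestedSum_map_mul {ι : Type*} (l : List ι) (c : ι → R) (φ : ι → ℕ → R) (n : ℕ) :
    nestedSum n (l.map fun i k => c i * φ i k) = (l.map c).prod * nestedSum n (l.map φ) := by
  induction l generalizing n with
  | nil => simp
  | cons i l ih =>
    simp only [List.map_cons, nestedSum_cons, ih, List.prod_cons, mul_sum]
    exact sum_congr rfl fun k _ => by ring

theorem nestedSum_middle_add (A : List (ℕ → R)) (f g : ℕ → R) (B : List (ℕ → R)) (n : ℕ) :
    nestedSum n (A ++ (f + g) :: B) = nestedSum n (A ++ f :: B) + nestedSum n (A ++ g :: B) := by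
  induction A generalizing n with
  | nil => simp only [List.nil_append, nestedSum_cons, Pi.add_apply, add_mul, sum_add_distrib]
  | cons h A ih => simp only [List.cons_append, nestedSum_cons, ih, mul_add, sum_add_distrib]

theorem nestedSum_middle_smul (A : List (ℕ → R)) (c : R) (f : ℕ → R) (B : List (ℕ → R))
    (n : ℕ) : nestedSum n (A ++ (c • f) :: B) = c * nestedSum n (A ++ f :: B) := by
  induction A generalizing n with
  | nil =>
    simp only [List.nil_append, nestedSum_cons, Pi.smul_apply, smul_eq_mul, mul_sum]
    exact sum_congr rfl fun k _ => by ring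
  | cons h A ih =>
    simp only [List.cons_append, nestedSum_cons, ih, mul_sum]
    exact sum_congr rfl fun k _ => by ring

end NestedSum

section ZValue

variable {ζ : ℂ}

noncomputable def zWeight (ζ : ℂ) (s k : ℕ) : ℂ := ζ ^ ((s - 1) * k) / qnum ζ k ^ s

noncomputable def zDualWeight (ζ : ℂ) (s k : ℕ) : ℂ := ζ ^ k / qnum ζ k ^ s

noncomputable def zDual (ζ : ℂ) (n : ℕ) (s : List ℕ) : ℂ :=
  nestedSum (n - 1) (s.reverse.map (zDualWeight ζ))

theorem zrev_eq_nestedSum (m : ℕ) (l : List ℕ) :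
    zrev ζ m l = nestedSum m (l.map (zWeight ζ)) := by
  induction l generalizing m with
  | nil => rfl
  | cons s l ih => simp only [zrev, ih, List.map_cons, nestedSum_cons, zWeight]

theorem z_eq_nestedSum (n : ℕ) (s : List ℕ) :
    z ζ n s = nestedSum (n - 1) (s.reverse.map (zWeight ζ)) :=
  zrev_eq_nestedSum _ _

theorem qnum_sub {n k : ℕ} (hζ : ζ ^ n = 1) (hk : k ≤ n) :
    qnum ζ (n - k) = -ζ ^ (n - k) * qnum ζ k := by
  have hprod : ζ ^ (n - k) * ζ ^ k = 1 := by rw [← pow_add, Nat.sub_add_cancel hk, hζ]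
  simp only [qnum]
  rw [mul_div_assoc']
  congr 1
  linear_combination -hprod

theorem zWeight_sub {n k s : ℕ} (hζ : ζ ^ n = 1) (hk : k ≤ n) (hs : s ≠ 0) :
    zWeight ζ s (n - k) = (-1) ^ s * zDualWeight ζ s k := by
  obtain ⟨t, rfl⟩ := Nat.exists_eq_add_one_of_ne_zero hs
  have hprod : ζ ^ (n - k) * ζ ^ k = 1 := by rw [← pow_add, Nat.sub_add_cancel hk, hζ]
  have hx : ζ ^ (n - k) ≠ 0 := left_ne_zero_of_mul_eq_one hprod
  rcases eq_or_ne (qnum ζ k) 0 with hq | hq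
  · simp [zWeight, zDualWeight, qnum_sub hζ hk, hq]
  simp only [zWeight, zDualWeight, qnum_sub hζ hk, Nat.add_sub_cancel, mul_comm t, pow_mul]
  field_simp
  have hsign : (-1 : ℂ) ^ (t + 1) * (-1) ^ (t + 1) = 1 := by rw [← mul_pow]; norm_num
  linear_combination -(ζ ^ (n - k)) ^ t * qnum ζ k ^ (t + 1) * hprod
    - (ζ ^ (n - k) * qnum ζ k) ^ (t + 1) * ζ ^ k * hsign

theorem zDualWeight_two : zDualWeight ζ 2 = zWeight ζ 2 := by
  funext k; simp [zDualWeight, zWeight]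

theorem zDualWeight_three : zDualWeight ζ 3 = zWeight ζ 3 + (1 - ζ) • zWeight ζ 2 := by
  funext k
  simp only [zDualWeight, zWeight, Pi.add_apply, Pi.smul_apply, smul_eq_mul]
  rcases eq_or_ne (qnum ζ k) 0 with hq | hq
  · simp [hq]
  have hζ : 1 - ζ ≠ 0 := by
    rintro h
    simp [qnum, h] at hq
  have hqnum : (1 - ζ) * qnum ζ k = 1 - ζ ^ k := by rw [qnum, mul_div_cancel₀ _ hζ]
  field_simp
  linear_combination (-ζ ^ k) * hqnum

theorem z_eq_neg_one_pow_mul_zDual_reverse {n : ℕ} {s : List ℕ} (hζ : ζ ^ n = 1)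
    (hs : 0 ∉ s) : z ζ n s = (-1) ^ s.sum * zDual ζ n s.reverse := by
  have hsign : (s.map fun i => (-1 : ℂ) ^ i).prod = (-1) ^ s.sum := by
    clear hs; induction s <;> simp [pow_add, *]
  rw [z_eq_nestedSum, nestedSum_reverse, ← List.map_reverse, List.reverse_reverse, List.map_map,
    zDual, List.reverse_reverse, ← hsign, ← nestedSum_map_mul]
  refine nestedSum_map_congr fun i hi k hk => ?_
  simp only [mem_Icc] at hk
  rw [Function.comp_apply, show n - 1 + 1 - k = n - k by omega]
  exact zWeight_sub hζ (by omega) (ne_of_mem_of_not_mem hi hs)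

theorem zDual_replicate_two_three (a b n : ℕ) :
    zDual ζ n (List.replicate a 2 ++ [3] ++ List.replicate b 2) =
      z ζ n (List.replicate a 2 ++ [3] ++ List.replicate b 2) +
        (1 - ζ) * z ζ n (List.replicate (a + b + 1) 2) := by
  simp only [zDual, z_eq_nestedSum, List.reverse_append, List.reverse_replicate,
    List.reverse_singleton, List.singleton_append, List.map_append, List.map_replicate,
    List.map_cons, zDualWeight_two, zDualWeight_three]
  rw [nestedSum_middle_add, nestedSum_middle_smul, show a + b + 1 = b + (a + 1) by omega,
    List.replicate_add, List.replicate_succ]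

end ZValue

theorem stmt13_general (a b n : ℕ) (ζ : ℂ) (hζ : IsPrimitiveRoot ζ n) :
    z ζ n (List.replicate a 2 ++ [3] ++ List.replicate b 2)
      + (1 - ζ) * z ζ n (List.replicate (a + b + 1) 2)
      = -z ζ n (List.replicate b 2 ++ [3] ++ List.replicate a 2) := by
  have hdual := z_eq_neg_one_pow_mul_zDual_reverse hζ.pow_eq_one
    (s := List.replicate b 2 ++ [3] ++ List.replicate a 2) (by simp)
  have hodd : Odd (List.replicate b 2 ++ [3] ++ List.replicate a 2).sum :=
    ⟨a + b + 1, by simp; ring⟩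
  rw [hodd.neg_one_pow, List.reverse_append, List.reverse_append, List.reverse_replicate,
    List.reverse_replicate, List.reverse_singleton, ← List.append_assoc,
    zDual_replicate_two_three] at hdual
  linear_combination hdual

theorem stmt13 (a b n : ℕ) (hn : 0 < n) (ζ : ℂ) (hζ : IsPrimitiveRoot ζ n) :
    z ζ n (List.replicate a 2 ++ [3] ++ List.replicate b 2)
      + (1 - ζ) * z ζ n (List.replicate (a + b + 1) 2)
      = -z ζ n (List.replicate b 2 ++ [3] ++ List.replicate a 2) :=
  stmt13_general a b n ζ hζ
end
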